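/- For a ≥ 8, the values of the irreducible characters of S_{2a+1} indexed by (a+1, a-2, 1, 1) and by (a+1, 5, 1^{a-5}) at the conjugacy class of cycle type (a, a-3, 2, 1, 1) both equal 0. -/

import Mathlib

/-- The beta-set (set of first-column hook lengths) of a partition given as a
weakly decreasing list of parts. -/
def betaSet (l : List ℕ) : List ℕ :=
  l.zipIdx.map (fun p => p.1 + (l.length - 1 - p.2))

/-- Recover a partition (weakly decreasing list of positive parts) from a
list of distinct beta-numbers. -/
def fromBeta (b : List ℕ) : List ℕ :=
  let s := List.insertionSort (· ≥ ·) b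
  (s.zipIdx.map (fun p => p.1 - (s.length - 1 - p.2))).filter (fun x => x ≠ 0)

/-- `MN β γ` is the value of the irreducible character of the symmetric group
indexed by the partition `β` at the conjugacy class of cycle type `γ`,
computed via the Murnaghan–Nakayama rule (phrased in terms of beta-numbers:
removing a rim hook of length `q` replaces a beta-number `x` by `x - q`,
the sign being `(-1)` to the number of beta-numbers strictly between
`x - q` and `x`, i.e. the leg length of the hook). -/
def MN : List ℕ → List ℕ → ℤ
  | β, [] => if β = [] then 1 else 0
  | β, q :: γ =>
      ((betaSet β).map (fun x =>
        if q ≤ x ∧ x - q ∉ betaSet β then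
          (-1) ^ ((betaSet β).filter (fun y => x - q < y ∧ y < x)).length *
            MN (fromBeta ((x - q) :: (betaSet β).erase x)) γ
        else 0)).sum

/-- `l` is a partition of `m`: a weakly decreasing list of positive parts
summing to `m`. -/
def IsPartition (l : List ℕ) (m : ℕ) : Prop :=
  l.Pairwise (· ≥ ·) ∧ (∀ i ∈ l, 0 < i) ∧ l.sum = m

/-- The conjugate (transpose) partition: `(conjugate l)_i = #{j : l_j > i}`. -/
def conjugate (l : List ℕ) : List ℕ :=
  (List.range (l.foldr max 0)).map (fun i => (l.filter (fun p => i < p)).length)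

/-! In the beta-number picture, a rim hook of length `a` can be removed from either partition
in exactly two ways. For `(a+1, a-2, 1, 1)` they leave `(a-3, 2, 1, 1)` with leg length 1 and
`(a+1)` with leg length 2; for `(a+1, 5, 1^(a-5))` they leave `(4, 2, 1^(a-5))` with leg length 1
and `(a+1)` with leg length `a-5`. At the remaining class `(a-3, 2, 1, 1)` the characters of
`(a-3, 2, 1, 1)`, `(4, 2, 1^(a-5))` and `(a+1)` take the values `1`, `(-1)^(a-5)` and `1`, so in
each case the two contributions cancel. -/

theorem betaSet_nil : betaSet [] = [] := rfl

theorem length_betaSet (l : List ℕ) : (betaSet l).length = l.length := by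
  simp [betaSet]

theorem getElem_betaSet (l : List ℕ) (i : ℕ) (hi : i < (betaSet l).length) :
    (betaSet l)[i] = l[i]'(by simpa [length_betaSet] using hi) + (l.length - 1 - i) := by
  simp [betaSet]

theorem betaSet_cons (x : ℕ) (l : List ℕ) : betaSet (x :: l) = (x + l.length) :: betaSet l := by
  apply List.ext_getElem (by simp [length_betaSet])
  intro i h₁ h₂
  cases i with
  | zero => simp [getElem_betaSet]
  | succ i => simp [getElem_betaSet]; omega

theorem betaSet_replicate (c j : ℕ) :
    betaSet (List.replicate j c) = (List.range' c j).reverse := by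
  induction j with
  | zero => rfl
  | succ j ih => simp [List.replicate_succ, betaSet_cons, ih, List.range'_concat]

theorem lt_add_length_of_mem_betaSet {l : List ℕ} {M : ℕ} (hM : ∀ x ∈ l, x ≤ M) :
    ∀ y ∈ betaSet l, y < M + l.length := by
  induction l with
  | nil => simp [betaSet_nil]
  | cons x l ih =>
    simp only [betaSet_cons, List.mem_cons, List.length_cons, forall_eq_or_imp] at hM ⊢
    exact ⟨by omega, fun y hy => by have := ih hM.2 y hy; omega⟩

theorem pairwise_gt_betaSet {l : List ℕ} (hl : l.Pairwise (· ≥ ·)) :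
    (betaSet l).Pairwise (· > ·) := by
  induction l with
  | nil => simp [betaSet_nil]
  | cons x l ih =>
    rw [List.pairwise_cons] at hl
    rw [betaSet_cons, List.pairwise_cons]
    exact ⟨fun y hy => lt_add_length_of_mem_betaSet hl.1 y hy, ih hl.2⟩

theorem fromBeta_of_perm_betaSet {L l : List ℕ} (hl : l.Pairwise (· ≥ ·))
    (hL : L.Perm (betaSet l)) : fromBeta L = l.filter (· ≠ 0) := by
  have hsort : L.insertionSort (· ≥ ·) = betaSet l :=
    ((List.perm_insertionSort _ L).trans hL).eq_of_pairwise'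
      (List.pairwise_insertionSort _ L) ((pairwise_gt_betaSet hl).imp le_of_lt)
  have hunshift : (betaSet l).zipIdx.map (fun p => p.1 - ((betaSet l).length - 1 - p.2)) = l := by
    apply List.ext_getElem (by simp [length_betaSet])
    intro i h₁ h₂
    simp [getElem_betaSet, length_betaSet]
  simp only [fromBeta, hsort, hunshift]

def hookTerm (β : List ℕ) (q : ℕ) (γ : List ℕ) (x : ℕ) : ℤ :=
  if q ≤ x ∧ x - q ∉ betaSet β then
    (-1) ^ ((betaSet β).filter (fun y => x - q < y ∧ y < x)).length *
      MN (fromBeta ((x - q) :: (betaSet β).erase x)) γ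
  else 0

theorem MN_cons (β : List ℕ) (q : ℕ) (γ : List ℕ) :
    MN β (q :: γ) = ((betaSet β).map (hookTerm β q γ)).sum := by
  rw [MN]; rfl

section HookTerm

variable {β γ : List ℕ} {q x : ℕ}

theorem hookTerm_of_lt (h : x < q) : hookTerm β q γ x = 0 :=
  if_neg fun h' => absurd h'.1 (not_le.2 h)

theorem hookTerm_of_mem (h : x - q ∈ betaSet β) : hookTerm β q γ x = 0 :=
  if_neg fun h' => h'.2 h

theorem hookTerm_of_le (hq : q ≤ x) (h : x - q ∉ betaSet β) :
    hookTerm β q γ x = (-1) ^ ((betaSet β).filter (fun y => x - q < y ∧ y < x)).length *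
      MN (fromBeta ((x - q) :: (betaSet β).erase x)) γ :=
  if_pos ⟨hq, h⟩

theorem sum_map_hookTerm_of_lt {T : List ℕ} (hT : ∀ x ∈ T, x < q) :
    (T.map (hookTerm β q γ)).sum = 0 :=
  List.sum_eq_zero fun _ hz => by
    obtain ⟨x, hx, rfl⟩ := List.mem_map.1 hz
    exact hookTerm_of_lt (hT x hx)

end HookTerm

theorem MN_singleton_add {n m : ℕ} (hn : 0 < n) (hm : 0 < m) (γ : List ℕ) :
    MN [n + m] (n :: γ) = MN [m] γ := by
  have hβ : betaSet [n + m] = [n + m] := rfl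
  have hfrom : fromBeta [m] = [m] := by
    rw [fromBeta_of_perm_betaSet (L := [m]) (l := [m]) (List.pairwise_singleton _ m) (.of_eq rfl)]
    simp [hm.ne']
  rw [MN_cons, hβ, List.map_singleton, List.sum_singleton,
    hookTerm_of_le (by omega) (by rw [hβ]; simp; omega), hβ]
  simp [hfrom]

theorem MN_four_211 : MN [4] [2, 1, 1] = 1 := by decide

theorem MN_singleton_n211 {n : ℕ} (hn : 0 < n) : MN [n + 4] [n, 2, 1, 1] = 1 := by
  rw [MN_singleton_add hn (by norm_num), MN_four_211]

theorem MN_n211_n211 {n : ℕ} (hn : 5 ≤ n) : MN [n, 2, 1, 1] [n, 2, 1, 1] = 1 := by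
  have hβ : betaSet [n, 2, 1, 1] = [n + 3, 4, 2, 1] := rfl
  have hleg : [n + 3, 4, 2, 1].filter (fun y => n + 3 - n < y ∧ y < n + 3) = [4] := by
    simp [show 4 < n + 3 by omega]
  have hfrom : fromBeta [3, 4, 2, 1] = [1, 1, 1, 1] := by decide
  have hcol : MN [1, 1, 1, 1] [2, 1, 1] = -1 := by decide
  rw [MN_cons, hβ, List.map_cons, List.sum_cons, sum_map_hookTerm_of_lt (by simp; omega),
    add_zero, hookTerm_of_le (by omega) (by rw [hβ]; simp; omega), hβ, hleg,
    List.erase_cons_head, Nat.add_sub_cancel_left, hfrom, hcol]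
  norm_num

theorem fromBeta_singleton_padded {m : ℕ} (hm : 0 < m) (j : ℕ) :
    fromBeta (0 :: (m + j + 1) :: (List.range' 1 j).reverse) = [m] := by
  have hβ : betaSet (m :: List.replicate (j + 1) 0) =
      (m + j + 1) :: ((List.range' 1 j).reverse ++ [0]) := by
    simp [betaSet_cons, betaSet_replicate, List.range'_succ, ← add_assoc]
  rw [fromBeta_of_perm_betaSet (l := m :: List.replicate (j + 1) 0)
    (by simp [List.pairwise_replicate])
    (hβ ▸ (List.Perm.swap _ _ _).trans (.cons _ (List.perm_append_singleton _ _).symm))]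
  simp [hm.ne']

theorem MN_4_2_replicate {k : ℕ} (hk : 3 ≤ k) :
    MN (4 :: 2 :: List.replicate k 1) [k + 2, 2, 1, 1] = (-1) ^ k := by
  set T := (List.range' 1 k).reverse with hT
  have hmemT {y : ℕ} : y ∈ T ↔ 1 ≤ y ∧ y ≤ k := by simp [hT]; omega
  have hβ : betaSet (4 :: 2 :: List.replicate k 1) = (k + 5) :: (k + 2) :: T := by
    simp [betaSet_cons, betaSet_replicate, hT]; omega
  have hleg : ((k + 5) :: (k + 2) :: T).filter
      (fun y => k + 2 - (k + 2) < y ∧ y < k + 2) = T := by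
    rw [List.filter_cons_of_neg (by simp), List.filter_cons_of_neg (by simp),
      List.filter_eq_self.2 (fun y hy => by have := hmemT.1 hy; simp; omega)]
  rw [MN_cons, hβ, List.map_cons, List.map_cons, List.sum_cons, List.sum_cons,
    sum_map_hookTerm_of_lt (fun y hy => by have := hmemT.1 hy; omega), add_zero,
    hookTerm_of_mem (by rw [hβ]; simp [hmemT]; omega),
    hookTerm_of_le le_rfl (by rw [hβ]; simp [hmemT]), hβ, hleg,
    List.erase_cons_tail (by simp), List.erase_cons_head, Nat.sub_self,
    show k + 5 = 4 + k + 1 by omega, fromBeta_singleton_padded (by norm_num)]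
  simp [hT, MN_four_211]

theorem MN_n4_n1_1_1_eq_zero {n : ℕ} (hn : 5 ≤ n) :
    MN [n + 4, n + 1, 1, 1] [n + 3, n, 2, 1, 1] = 0 := by
  have hβ : betaSet [n + 4, n + 1, 1, 1] = [n + 7, n + 3, 2, 1] := rfl
  have hfrom : fromBeta [4, n + 3, 2, 1] = [n, 2, 1, 1] := by
    rw [fromBeta_of_perm_betaSet (L := [4, n + 3, 2, 1]) (l := [n, 2, 1, 1]) (by simp; omega)
      (.swap _ _ _)]
    simp; omega
  have hleg₁ : [n + 7, n + 3, 2, 1].filter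
      (fun y => n + 7 - (n + 3) < y ∧ y < n + 7) = [n + 3] := by
    simp [show 4 < n + 3 by omega]
  have hleg₂ : [n + 7, n + 3, 2, 1].filter
      (fun y => n + 3 - (n + 3) < y ∧ y < n + 3) = [2, 1] := by
    simp [show 2 < n + 3 by omega]
  have hfrom0 : fromBeta [0, n + 7, 2, 1] = [n + 4] :=
    fromBeta_singleton_padded (m := n + 4) (by omega) 2
  rw [MN_cons, hβ, List.map_cons, List.map_cons, List.sum_cons, List.sum_cons,
    sum_map_hookTerm_of_lt (by simp), add_zero,
    hookTerm_of_le (by omega) (by rw [hβ]; simp; omega),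
    hookTerm_of_le le_rfl (by rw [hβ]; simp), hβ, hleg₁, hleg₂,
    show n + 7 - (n + 3) = 4 by omega, Nat.sub_self, List.erase_cons_head,
    List.erase_cons_tail (by simp), List.erase_cons_head, hfrom, hfrom0, MN_n211_n211 hn,
    MN_singleton_n211 (by omega)]
  norm_num

theorem MN_k6_5_replicate_eq_zero {k : ℕ} (hk : 3 ≤ k) :
    MN ((k + 6) :: 5 :: List.replicate k 1) [k + 5, k + 2, 2, 1, 1] = 0 := by
  set T := (List.range' 1 k).reverse with hT
  have hmemT {y : ℕ} : y ∈ T ↔ 1 ≤ y ∧ y ≤ k := by simp [hT]; omega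
  have hβ : betaSet ((k + 6) :: 5 :: List.replicate k 1) = (2 * k + 7) :: (k + 5) :: T := by
    simp [betaSet_cons, betaSet_replicate, hT]; omega
  have hleg₁ : ((2 * k + 7) :: (k + 5) :: T).filter
      (fun y => 2 * k + 7 - (k + 5) < y ∧ y < 2 * k + 7) = [k + 5] := by
    rw [List.filter_cons_of_neg (by simp), List.filter_cons_of_pos (by simp; omega),
      List.filter_eq_nil_iff.2 (fun y hy => by have := hmemT.1 hy; simp; omega)]
  have hleg₂ : ((2 * k + 7) :: (k + 5) :: T).filter
      (fun y => k + 5 - (k + 5) < y ∧ y < k + 5) = T := by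
    rw [List.filter_cons_of_neg (by simp; omega), List.filter_cons_of_neg (by simp),
      List.filter_eq_self.2 (fun y hy => by have := hmemT.1 hy; simp; omega)]
  have hfrom : fromBeta ((k + 2) :: (k + 5) :: T) = 4 :: 2 :: List.replicate k 1 := by
    have hβ' : betaSet (4 :: 2 :: List.replicate k 1) = (k + 5) :: (k + 2) :: T := by
      simp [betaSet_cons, betaSet_replicate, hT]; omega
    rw [fromBeta_of_perm_betaSet (L := (k + 2) :: (k + 5) :: T)
      (l := 4 :: 2 :: List.replicate k 1) (by simp [List.pairwise_replicate])
      (hβ' ▸ .swap _ _ _)]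
    simp
  rw [MN_cons, hβ, List.map_cons, List.map_cons, List.sum_cons, List.sum_cons,
    sum_map_hookTerm_of_lt (fun y hy => by have := hmemT.1 hy; omega), add_zero,
    hookTerm_of_le (by omega) (by rw [hβ]; simp [hmemT]; omega),
    hookTerm_of_le le_rfl (by rw [hβ]; simp [hmemT]), hβ, hleg₁, hleg₂,
    List.erase_cons_head, List.erase_cons_tail (by simp; omega), List.erase_cons_head,
    show 2 * k + 7 - (k + 5) = k + 2 by omega, Nat.sub_self, hfrom,
    show 2 * k + 7 = k + 6 + k + 1 by omega, fromBeta_singleton_padded (by omega),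
    MN_4_2_replicate hk, show k + 6 = k + 2 + 4 by omega, MN_singleton_n211 (by omega)]
  simp [hT]

/-- For `a ≥ 8`, the irreducible characters of `S_{2a+1}` indexed by
`(a+1, a-2, 1, 1)` and by `(a+1, 5, 1^{a-5})` both vanish at the class of
cycle type `(a, a-3, 2, 1, 1)`. -/
theorem stmt_13 (a : ℕ) (ha : 8 ≤ a) :
    MN [a + 1, a - 2, 1, 1] [a, a - 3, 2, 1, 1] = 0 ∧
    MN ((a + 1) :: 5 :: List.replicate (a - 5) 1) [a, a - 3, 2, 1, 1] = 0 := by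
  obtain ⟨k, rfl⟩ : ∃ k, a = k + 5 := ⟨a - 5, by omega⟩
  constructor
  · simpa using MN_n4_n1_1_1_eq_zero (n := k + 2) (by omega)
  · simpa using MN_k6_5_replicate_eq_zero (k := k) (by omega)
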